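/- If a 2-copula C satisfies C(2/3,1/3) = 1/3 and C(1/3,2/3) = 0, then sup_{(u,v)∈[0,1]²}|C(u,v)−C(v,u)| = 1/3, i.e., C has maximal asymmetry. -/

import Mathlib

open Set

/-- A 2-copula on [0,1]². -/
def IsCopula2 (C : ℝ → ℝ → ℝ) : Prop :=
  (∀ u ∈ Set.Icc (0:ℝ) 1, ∀ v ∈ Set.Icc (0:ℝ) 1, C u v ∈ Set.Icc (0:ℝ) 1) ∧
  (∀ u ∈ Set.Icc (0:ℝ) 1, C u 0 = 0 ∧ C 0 u = 0 ∧ C u 1 = u ∧ C 1 u = u) ∧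
  (∀ u ∈ Set.Icc (0:ℝ) 1, ∀ u' ∈ Set.Icc (0:ℝ) 1, ∀ v ∈ Set.Icc (0:ℝ) 1, ∀ v' ∈ Set.Icc (0:ℝ) 1,
    u ≤ u' → v ≤ v' → 0 ≤ C u' v' - C u' v - C u v' + C u v)

/-- The asymmetry measure ‖d_C‖_∞ = sup |C(u,v) − C(v,u)| over [0,1]². -/
noncomputable def asym (C : ℝ → ℝ → ℝ) : ℝ :=
  sSup {x | ∃ u ∈ Set.Icc (0:ℝ) 1, ∃ v ∈ Set.Icc (0:ℝ) 1, x = |C u v - C v u|}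

/-!
Every copula is monotone and 1-Lipschitz in each variable and lies between the Fréchet bounds
`max (u + v - 1) 0 ≤ C u v ≤ min u v`. For `u ≤ v` this bounds `C u v - C v u` by each of
`u` (as `C v u ≥ 0`), `1 - v` (Fréchet bounds) and `v - u` (via `C u v ≤ C v v`), and these three
sum to `1`. So the asymmetry never exceeds `1/3`, and the two prescribed values attain it
at `(2/3, 1/3)`.
-/

namespace IsCopula2

variable {C : ℝ → ℝ → ℝ} (hC : IsCopula2 C) {u v w : ℝ}
include hC

lemma nonneg (hu : u ∈ Icc (0:ℝ) 1) (hv : v ∈ Icc (0:ℝ) 1) : 0 ≤ C u v :=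
  (hC.1 u hu v hv).1

lemma mono_left (hu : u ∈ Icc (0:ℝ) 1) (hv : v ∈ Icc (0:ℝ) 1) (hw : w ∈ Icc (0:ℝ) 1)
    (huv : u ≤ v) : C u w ≤ C v w := by
  have h := hC.2.2 u hu v hv 0 (by norm_num) w hw huv hw.1
  linarith [(hC.2.1 u hu).1, (hC.2.1 v hv).1]

lemma mono_right (hu : u ∈ Icc (0:ℝ) 1) (hv : v ∈ Icc (0:ℝ) 1) (hw : w ∈ Icc (0:ℝ) 1)
    (huv : u ≤ v) : C w u ≤ C w v := by
  have h := hC.2.2 0 (by norm_num) w hw u hu v hv hw.1 huv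
  linarith [(hC.2.1 u hu).2.1, (hC.2.1 v hv).2.1]

lemma sub_le_left (hu : u ∈ Icc (0:ℝ) 1) (hv : v ∈ Icc (0:ℝ) 1) (hw : w ∈ Icc (0:ℝ) 1)
    (huv : u ≤ v) : C v w - C u w ≤ v - u := by
  have h := hC.2.2 u hu v hv w hw 1 (by norm_num) huv hw.2
  linarith [(hC.2.1 u hu).2.2.1, (hC.2.1 v hv).2.2.1]

lemma sub_le_right (hu : u ∈ Icc (0:ℝ) 1) (hv : v ∈ Icc (0:ℝ) 1) (hw : w ∈ Icc (0:ℝ) 1)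
    (huv : u ≤ v) : C w v - C w u ≤ v - u := by
  have h := hC.2.2 w hw 1 (by norm_num) u hu v hv hw.2 huv
  linarith [(hC.2.1 u hu).2.2.2, (hC.2.1 v hv).2.2.2]

lemma le_left (hu : u ∈ Icc (0:ℝ) 1) (hv : v ∈ Icc (0:ℝ) 1) : C u v ≤ u := by
  linarith [hC.mono_right hv (right_mem_Icc.2 zero_le_one) hu hv.2, (hC.2.1 u hu).2.2.1]

lemma le_right (hu : u ∈ Icc (0:ℝ) 1) (hv : v ∈ Icc (0:ℝ) 1) : C u v ≤ v := by
  linarith [hC.mono_left hu (right_mem_Icc.2 zero_le_one) hv hu.2, (hC.2.1 v hv).2.2.2]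

lemma add_sub_one_le (hu : u ∈ Icc (0:ℝ) 1) (hv : v ∈ Icc (0:ℝ) 1) : u + v - 1 ≤ C u v := by
  have h1 : (1:ℝ) ∈ Icc (0:ℝ) 1 := right_mem_Icc.2 zero_le_one
  have h := hC.2.2 u hu 1 h1 v hv 1 h1 hu.2 hv.2
  linarith [(hC.2.1 u hu).2.2.1, (hC.2.1 v hv).2.2.2, (hC.2.1 1 h1).2.2.1]

lemma sub_swap_le (hu : u ∈ Icc (0:ℝ) 1) (hv : v ∈ Icc (0:ℝ) 1) : C u v - C v u ≤ 1/3 := by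
  rcases le_total u v with huv | hvu
  · have h_le_u : C u v - C v u ≤ u := by linarith [hC.le_left hu hv, hC.nonneg hv hu]
    have h_le_one_sub_v : C u v - C v u ≤ 1 - v := by
      linarith [hC.le_left hu hv, hC.add_sub_one_le hv hu]
    have h_le_v_sub_u : C u v - C v u ≤ v - u := by
      linarith [hC.mono_left hu hv hv huv, hC.sub_le_right hu hv hv huv]
    linarith
  · have h_le_v : C u v - C v u ≤ v := by linarith [hC.le_right hu hv, hC.nonneg hv hu]
    have h_le_one_sub_u : C u v - C v u ≤ 1 - u := by
      linarith [hC.le_right hu hv, hC.add_sub_one_le hv hu]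
    have h_le_u_sub_v : C u v - C v u ≤ u - v := by
      linarith [hC.mono_right hv hu hv hvu, hC.sub_le_left hv hu hv hvu]
    linarith

lemma abs_sub_swap_le (hu : u ∈ Icc (0:ℝ) 1) (hv : v ∈ Icc (0:ℝ) 1) :
    |C u v - C v u| ≤ 1/3 :=
  abs_le.2 ⟨by linarith [hC.sub_swap_le hv hu], hC.sub_swap_le hu hv⟩

end IsCopula2

/-- If C(2/3,1/3) = 1/3 and C(1/3,2/3) = 0, then C has maximal asymmetry 1/3. -/
theorem maximal_asymmetry_of_values (C : ℝ → ℝ → ℝ) (hC : IsCopula2 C)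
    (h₁ : C (2/3) (1/3) = 1/3) (h₂ : C (1/3) (2/3) = 0) :
    asym C = 1/3 := by
  refine IsGreatest.csSup_eq ⟨⟨2/3, by norm_num, 1/3, by norm_num, ?_⟩, ?_⟩
  · rw [h₁, h₂]
    norm_num
  · rintro x ⟨u, hu, v, hv, rfl⟩
    exact hC.abs_sub_swap_le hu hv
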